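/- The planar-to-sphere exponential map f : ℝ² → ℝ³ defined by f(x) = ((sin‖x‖/‖x‖)·x₁, (sin‖x‖/‖x‖)·x₂, cos‖x‖) for x ≠ 0 and f(0) = (0,0,1) is 1-Lipschitz on the closed disk of radius π centered at the origin. -/

import Mathlib

/-!
Write `a = ‖x‖`, `b = ‖y‖`, `p = ⟪x, y⟫` and `f x = (sinc a • x, cos a)`. Then
`‖f x - f y‖² = 2 - 2 cos a cos b - 2 sinc a sinc b p` and `‖x - y‖² = a² + b² - 2p`.
Since `sinc a sinc b ≤ 1` and `p ≤ ab`, the second minus the first is at least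
`(a - b)² - 2 (1 - cos (a - b))`, which is nonnegative because `1 - cos t ≤ t² / 2`.
-/

open Real Metric
open scoped Classical

/-- The exponential map of the unit sphere at the north pole `(0,0,1)`, written in
coordinates: `f x = ((sin ‖x‖ / ‖x‖) • x₁, (sin ‖x‖ / ‖x‖) • x₂, cos ‖x‖)` for `x ≠ 0`,
and `f 0 = (0, 0, 1)`. -/
noncomputable def sphereExp (x : EuclideanSpace ℝ (Fin 2)) : EuclideanSpace ℝ (Fin 3) :=
  if x = 0 then (WithLp.equiv 2 (Fin 3 → ℝ)).symm ![0, 0, 1]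
  else (WithLp.equiv 2 (Fin 3 → ℝ)).symm
    ![(Real.sin ‖x‖ / ‖x‖) * x 0, (Real.sin ‖x‖ / ‖x‖) * x 1, Real.cos ‖x‖]

open scoped RealInnerProductSpace

lemma Real.sinc_mul_self (x : ℝ) : sinc x * x = sin x := by
  rcases eq_or_ne x 0 with rfl | hx
  · simp
  · rw [sinc_of_ne_zero hx, div_mul_cancel₀ _ hx]

theorem norm_sinc_smul_sub_sq_add_cos_sub_sq_le {F : Type*} [NormedAddCommGroup F]
    [InnerProductSpace ℝ F] (x y : F) :
    ‖sinc ‖x‖ • x - sinc ‖y‖ • y‖ ^ 2 + (cos ‖x‖ - cos ‖y‖) ^ 2 ≤ ‖x - y‖ ^ 2 := by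
  set a := ‖x‖
  set b := ‖y‖
  have h_inner : ⟪x, y⟫ ≤ a * b := real_inner_le_norm x y
  have h_sinc : sinc a * sinc b ≤ 1 := (le_abs_self _).trans <| by
    rw [abs_mul]
    exact mul_le_one₀ (abs_sinc_le_one a) (abs_nonneg _) (abs_sinc_le_one b)
  have h_sin : sinc a * sinc b * (a * b) = sin a * sin b := by
    rw [← sinc_mul_self a, ← sinc_mul_self b]; ring
  have h_cos : 1 - (a - b) ^ 2 / 2 ≤ cos a * cos b + sin a * sin b :=
    cos_sub a b ▸ one_sub_sq_div_two_le_cos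
  have h_lhs : ‖sinc a • x - sinc b • y‖ ^ 2
      = sin a ^ 2 - 2 * (sinc a * sinc b) * ⟪x, y⟫ + sin b ^ 2 := by
    rw [norm_sub_sq_real, norm_smul, norm_smul, real_inner_smul_left, real_inner_smul_right,
      Real.norm_eq_abs, Real.norm_eq_abs, mul_pow, mul_pow, sq_abs, sq_abs, ← mul_pow,
      ← mul_pow, sinc_mul_self, sinc_mul_self]
    ring
  rw [h_lhs, norm_sub_sq_real]
  linear_combination 2 * h_cos + 2 * mul_nonneg (sub_nonneg.2 h_sinc) (sub_nonneg.2 h_inner)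
    - 2 * h_sin + sin_sq_add_cos_sq a + sin_sq_add_cos_sq b

lemma sphereExp_eq (x : EuclideanSpace ℝ (Fin 2)) :
    sphereExp x = WithLp.toLp 2 ![sinc ‖x‖ * x 0, sinc ‖x‖ * x 1, cos ‖x‖] := by
  unfold sphereExp
  split_ifs with hx
  · subst hx
    simp
  · simp [sinc_of_ne_zero (norm_ne_zero_iff.2 hx)]

lemma dist_sphereExp_sq (x y : EuclideanSpace ℝ (Fin 2)) :
    dist (sphereExp x) (sphereExp y) ^ 2
      = ‖sinc ‖x‖ • x - sinc ‖y‖ • y‖ ^ 2 + (cos ‖x‖ - cos ‖y‖) ^ 2 := by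
  rw [sphereExp_eq, sphereExp_eq, EuclideanSpace.dist_eq, sq_sqrt (by positivity),
    EuclideanSpace.norm_sq_eq, Fin.sum_univ_three, Fin.sum_univ_two]
  simp [Real.dist_eq, sq_abs]

theorem sphereExp_lipschitzWith_one : LipschitzWith 1 sphereExp := by
  refine LipschitzWith.of_dist_le_mul fun x y => ?_
  rw [NNReal.coe_one, one_mul, ← pow_le_pow_iff_left₀ dist_nonneg dist_nonneg two_ne_zero,
    dist_sphereExp_sq, dist_eq_norm]
  exact norm_sinc_smul_sub_sq_add_cos_sub_sq_le x y

/-- The planar-to-sphere exponential map is 1-Lipschitz on the closed disk of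
radius π centered at the origin. -/
theorem sphereExp_lipschitzOnWith_one :
    LipschitzOnWith 1 sphereExp (Metric.closedBall (0 : EuclideanSpace ℝ (Fin 2)) π) :=
  sphereExp_lipschitzWith_one.lipschitzOnWith
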